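/- Under the simplified (1+ε)-property, if X_i, X_j ∈ ℝ^d have all entries bounded in absolute value by x_max, and the squared Euclidean distance D_ij is computed in floating point via the decomposition D_ij = ‖X_i‖² + ‖X_j‖² − 2·X_iᵀX_j (with each of the three terms computed by pairwise summation, followed by one floating-point addition and one subtraction), then the rounding error satisfies |D_ij − fl(D_ij)| ≤ 4d · x_max² · [(1+ε)^(3+⌈log₂ d⌉) − 1]. -/

import Mathlib

lemma err_step (ε P δ : ℝ) (n : ℕ) (hε : 0 ≤ ε)
    (hP : |P - 1| ≤ (1 + ε) ^ n - 1) (hδ : |δ| ≤ ε) :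
    |P * (1 + δ) - 1| ≤ (1 + ε) ^ (n + 1) - 1 := by
  have h1 : P * (1 + δ) - 1 = (P - 1) * (1 + δ) + δ := by ring
  have h2 : |1 + δ| ≤ 1 + ε := by
    calc |1 + δ| ≤ |(1:ℝ)| + |δ| := abs_add_le _ _
      _ ≤ 1 + ε := by rw [abs_one]; linarith
  have h3 : |(P - 1) * (1 + δ) + δ| ≤ |P - 1| * |1 + δ| + |δ| := by
    calc |(P - 1) * (1 + δ) + δ| ≤ |(P - 1) * (1 + δ)| + |δ| := abs_add_le _ _
      _ = |P - 1| * |1 + δ| + |δ| := by rw [abs_mul]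
  have h4 : |P - 1| * |1 + δ| ≤ ((1 + ε) ^ n - 1) * (1 + ε) :=
    mul_le_mul hP h2 (abs_nonneg _) (by
      have := one_le_pow₀ (show (1:ℝ) ≤ 1 + ε by linarith) (n := n); linarith)
  have h5 : ((1 + ε) ^ n - 1) * (1 + ε) + ε = (1 + ε) ^ (n + 1) - 1 := by
    rw [pow_succ]; ring
  rw [h1]
  linarith [h3, h4, hδ]

lemma prod_err {ι : Type*} (ε : ℝ) (hε : 0 ≤ ε) (s : Finset ι) (f : ι → ℝ)
    (hf : ∀ i ∈ s, |f i| ≤ ε) :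
    |(∏ i ∈ s, (1 + f i)) - 1| ≤ (1 + ε) ^ s.card - 1 := by
  induction s using Finset.cons_induction with
  | empty => simp
  | cons a s ha ih =>
    rw [Finset.prod_cons, Finset.card_cons, mul_comm]
    exact err_step ε _ (f a) s.card hε
      (ih fun i hi => hf i (Finset.mem_cons_of_mem hi))
      (hf a (Finset.mem_cons_self a s))

lemma abs_sum_err {d : ℕ} (a Q : Fin d → ℝ) (M E : ℝ) (hM : 0 ≤ M)
    (ha : ∀ k, |a k| ≤ M) (hQ : ∀ k, |Q k - 1| ≤ E) :
    |(∑ k, a k) - ∑ k, a k * Q k| ≤ d * (M * E) := by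
  rw [← Finset.sum_sub_distrib]
  refine (Finset.abs_sum_le_sum_abs _ _).trans ?_
  have hterm : ∀ k, |a k - a k * Q k| ≤ M * E := by
    intro k
    have h : a k - a k * Q k = a k * (1 - Q k) := by ring
    rw [h, abs_mul, abs_sub_comm]
    exact mul_le_mul (ha k) (hQ k) (abs_nonneg _) hM
  calc ∑ k, |a k - a k * Q k| ≤ ∑ _k : Fin d, M * E :=
        Finset.sum_le_sum fun k _ => hterm k
    _ = d * (M * E) := by simp [Finset.sum_const, Finset.card_univ]

/-- Rounding error of the floating-point squared Euclidean distance computed via the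
decomposition `D_ij = ‖X_i‖² + ‖X_j‖² − 2·X_iᵀX_j`, where each of the three terms is
computed by coordinate-wise multiplication plus pairwise summation (at most
`1+⌈log₂ d⌉` roundings per term) followed by one floating-point addition and one
subtraction: `|D_ij − fl(D_ij)| ≤ 4d · x_max² · [(1+ε)^(3+⌈log₂ d⌉) − 1]`. -/
theorem pairwise_distance_rounding_error (d : ℕ) (hd : 0 < d) (ε xmax : ℝ) (hε : 0 ≤ ε)
    (Xi Xj : Fin d → ℝ) (hXi : ∀ k, |Xi k| ≤ xmax) (hXj : ∀ k, |Xj k| ≤ xmax)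
    (δA δB δC : Fin d → Fin (1 + Nat.clog 2 d) → ℝ)
    (hδA : ∀ k l, |δA k l| ≤ ε) (hδB : ∀ k l, |δB k l| ≤ ε) (hδC : ∀ k l, |δC k l| ≤ ε)
    (δ₁ δ₂ : ℝ) (hδ₁ : |δ₁| ≤ ε) (hδ₂ : |δ₂| ≤ ε)
    (A B C Dhat : ℝ)
    (hA : A = ∑ k, (Xi k) ^ 2 * ∏ l, (1 + δA k l))
    (hB : B = ∑ k, (Xj k) ^ 2 * ∏ l, (1 + δB k l))
    (hC : C = ∑ k, (Xi k * Xj k) * ∏ l, (1 + δC k l))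
    (hD : Dhat = ((A + B) * (1 + δ₁) - 2 * C) * (1 + δ₂)) :
    |(∑ k, (Xi k) ^ 2 + ∑ k, (Xj k) ^ 2 - 2 * ∑ k, Xi k * Xj k) - Dhat|
      ≤ 4 * d * xmax ^ 2 * ((1 + ε) ^ (3 + Nat.clog 2 d) - 1) := by
  have hone : (1:ℝ) ≤ 1 + ε := by linarith
  have hEnn : (0:ℝ) ≤ (1 + ε) ^ (3 + Nat.clog 2 d) - 1 := by
    have := one_le_pow₀ hone (n := 3 + Nat.clog 2 d); linarith
  have hxmax : 0 ≤ xmax := le_trans (abs_nonneg _) (hXi ⟨0, hd⟩)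
  have hx2 : ∀ (u v : Fin d → ℝ), (∀ k, |u k| ≤ xmax) → (∀ k, |v k| ≤ xmax) →
      ∀ k, |u k * v k| ≤ xmax ^ 2 := by
    intro u v hu hv k
    rw [abs_mul, sq]
    exact mul_le_mul (hu k) (hv k) (abs_nonneg _) hxmax
  have hcard : (Finset.univ : Finset (Fin (1 + Nat.clog 2 d))).card = 1 + Nat.clog 2 d := by simp
  have hprd : ∀ (g : Fin d → Fin (1 + Nat.clog 2 d) → ℝ), (∀ k l, |g k l| ≤ ε) →
      ∀ k, |(∏ l, (1 + g k l)) - 1| ≤ (1 + ε) ^ (1 + Nat.clog 2 d) - 1 := by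
    intro g hg k
    have := prod_err ε hε Finset.univ (g k) (fun l _ => hg k l)
    rwa [hcard] at this
  have h3m : 1 + Nat.clog 2 d + 1 + 1 = 3 + Nat.clog 2 d := by omega
  have hQ2 : ∀ (g : Fin d → Fin (1 + Nat.clog 2 d) → ℝ), (∀ k l, |g k l| ≤ ε) →
      ∀ k, |(∏ l, (1 + g k l)) * (1 + δ₁) * (1 + δ₂) - 1| ≤ (1 + ε) ^ (3 + Nat.clog 2 d) - 1 := by
    intro g hg k
    have h1 := err_step ε _ δ₁ (1 + Nat.clog 2 d) hε (hprd g hg k) hδ₁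
    have h2 := err_step ε _ δ₂ (1 + Nat.clog 2 d + 1) hε h1 hδ₂
    rwa [h3m] at h2
  have hQC : ∀ k, |(∏ l, (1 + δC k l)) * (1 + δ₂) - 1| ≤ (1 + ε) ^ (3 + Nat.clog 2 d) - 1 := by
    intro k
    refine (err_step ε _ δ₂ (1 + Nat.clog 2 d) hε (hprd δC hδC k) hδ₂).trans ?_
    have : (1 + ε) ^ (1 + Nat.clog 2 d + 1) ≤ (1 + ε) ^ (3 + Nat.clog 2 d) := pow_le_pow_right₀ hone (by omega)
    linarith
  have hA' : A * ((1 + δ₁) * (1 + δ₂))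
      = ∑ k, (Xi k) ^ 2 * ((∏ l, (1 + δA k l)) * (1 + δ₁) * (1 + δ₂)) := by
    rw [hA, Finset.sum_mul]; exact Finset.sum_congr rfl fun k _ => by ring
  have hB' : B * ((1 + δ₁) * (1 + δ₂))
      = ∑ k, (Xj k) ^ 2 * ((∏ l, (1 + δB k l)) * (1 + δ₁) * (1 + δ₂)) := by
    rw [hB, Finset.sum_mul]; exact Finset.sum_congr rfl fun k _ => by ring
  have hC' : C * (1 + δ₂)
      = ∑ k, (Xi k * Xj k) * ((∏ l, (1 + δC k l)) * (1 + δ₂)) := by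
    rw [hC, Finset.sum_mul]; exact Finset.sum_congr rfl fun k _ => by ring
  have hDhat : Dhat = (∑ k, (Xi k) ^ 2 * ((∏ l, (1 + δA k l)) * (1 + δ₁) * (1 + δ₂)))
      + (∑ k, (Xj k) ^ 2 * ((∏ l, (1 + δB k l)) * (1 + δ₁) * (1 + δ₂)))
      - 2 * ∑ k, (Xi k * Xj k) * ((∏ l, (1 + δC k l)) * (1 + δ₂)) := by
    rw [← hA', ← hB', ← hC', hD]; ring
  have e1 := abs_sum_err (fun k => (Xi k) ^ 2)
    (fun k => (∏ l, (1 + δA k l)) * (1 + δ₁) * (1 + δ₂)) (xmax ^ 2) ((1 + ε) ^ (3 + Nat.clog 2 d) - 1)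
    (by positivity) (fun k => by show |Xi k ^ 2| ≤ xmax ^ 2; rw [sq]; exact hx2 Xi Xi hXi hXi k)
    (hQ2 δA hδA)
  have e2 := abs_sum_err (fun k => (Xj k) ^ 2)
    (fun k => (∏ l, (1 + δB k l)) * (1 + δ₁) * (1 + δ₂)) (xmax ^ 2) ((1 + ε) ^ (3 + Nat.clog 2 d) - 1)
    (by positivity) (fun k => by show |Xj k ^ 2| ≤ xmax ^ 2; rw [sq]; exact hx2 Xj Xj hXj hXj k)
    (hQ2 δB hδB)
  have e3 := abs_sum_err (fun k => Xi k * Xj k)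
    (fun k => (∏ l, (1 + δC k l)) * (1 + δ₂)) (xmax ^ 2) ((1 + ε) ^ (3 + Nat.clog 2 d) - 1)
    (by positivity) (hx2 Xi Xj hXi hXj) hQC
  have heq : (∑ k, (Xi k) ^ 2 + ∑ k, (Xj k) ^ 2 - 2 * ∑ k, Xi k * Xj k) - Dhat
      = ((∑ k, (Xi k) ^ 2) - ∑ k, (Xi k) ^ 2 * ((∏ l, (1 + δA k l)) * (1 + δ₁) * (1 + δ₂)))
      + (((∑ k, (Xj k) ^ 2) - ∑ k, (Xj k) ^ 2 * ((∏ l, (1 + δB k l)) * (1 + δ₁) * (1 + δ₂)))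
      - 2 * ((∑ k, Xi k * Xj k) - ∑ k, (Xi k * Xj k) * ((∏ l, (1 + δC k l)) * (1 + δ₂)))) := by
    rw [hDhat]; ring
  rw [heq]
  have t1 := abs_add_le ((∑ k, (Xi k) ^ 2) - ∑ k, (Xi k) ^ 2 * ((∏ l, (1 + δA k l)) * (1 + δ₁) * (1 + δ₂)))
    (((∑ k, (Xj k) ^ 2) - ∑ k, (Xj k) ^ 2 * ((∏ l, (1 + δB k l)) * (1 + δ₁) * (1 + δ₂)))
      - 2 * ((∑ k, Xi k * Xj k) - ∑ k, (Xi k * Xj k) * ((∏ l, (1 + δC k l)) * (1 + δ₂))))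
  have t2 := abs_sub ((∑ k, (Xj k) ^ 2) - ∑ k, (Xj k) ^ 2 * ((∏ l, (1 + δB k l)) * (1 + δ₁) * (1 + δ₂)))
    (2 * ((∑ k, Xi k * Xj k) - ∑ k, (Xi k * Xj k) * ((∏ l, (1 + δC k l)) * (1 + δ₂))))
  have t3 : |2 * ((∑ k, Xi k * Xj k) - ∑ k, (Xi k * Xj k) * ((∏ l, (1 + δC k l)) * (1 + δ₂)))|
      = 2 * |(∑ k, Xi k * Xj k) - ∑ k, (Xi k * Xj k) * ((∏ l, (1 + δC k l)) * (1 + δ₂))| := by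
    rw [abs_mul, abs_two]
  nlinarith [e1, e2, e3, t1, t2, t3]
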